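/- Let M ≥ 2 be even. Let T : ℕ → ℝ → ℝ be positive functions satisfying the T-system, duality, periodicity T_j(x+2M+2) = T_j(x), and the generalized T-system identities. Define ψ(x) = arcsin(1/√(T_M(x)T_M(x+2))). Then cos(ψ(x) + ψ(x+2) + ⋯ + ψ(x + 2(M−1))) = 1 / √(T_M(x)·T_M(x + 2M)). -/

import Mathlib

/-!
By the T-system and duality, `T_M(y) T_M(y+2) = 1 + T_{M-1}(y+1)^2`, so `ψ y` is the argument of
`T_{M-1}(y+1) + i`, a complex number of modulus `√(T_M(y) T_M(y+2))`. Two instances of the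
generalized T-system (the second combined with duality and periodicity) show that
`T_{M-n}(x+n) + i T_{n-1}(x+M+n+1)` has modulus `√(T_M(x) T_M(x+2n))` and argument
`ψ x + ψ (x+2) + ⋯ + ψ (x+2(n-1))`. At `n = M` its real part is `T_0 = 1`.
-/

open Real Finset

lemma cos_add_mul_mul_and_sin_add_mul_mul {θ φ R r a b c d : ℝ}
    (hθc : cos θ * R = a) (hθs : sin θ * R = b) (hφc : cos φ * r = c) (hφs : sin φ * r = d) :
    cos (θ + φ) * (R * r) = a * c - b * d ∧ sin (θ + φ) * (R * r) = b * c + a * d := by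
  subst a b c d
  constructor
  · rw [cos_add]; ring
  · rw [sin_add]; ring

lemma sqrt_mul_mul_sqrt_mul {a b : ℝ} (c : ℝ) (ha : 0 ≤ a) (hb : 0 ≤ b) :
    √(a * b) * √(b * c) = b * √(a * c) := by
  rw [← sqrt_mul (mul_nonneg ha hb), show a * b * (b * c) = b * b * (a * c) by ring,
    sqrt_mul (mul_self_nonneg b), sqrt_mul_self hb]

lemma sin_arcsin_one_div_sqrt_one_add_sq_mul (q : ℝ) :
    sin (arcsin (1 / √(1 + q ^ 2))) * √(1 + q ^ 2) = 1 := by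
  have hs : 1 ≤ √(1 + q ^ 2) := one_le_sqrt.mpr (by nlinarith [sq_nonneg q])
  have hinv : 0 ≤ 1 / √(1 + q ^ 2) := by positivity
  rw [sin_arcsin (by linarith) ((div_le_one (by positivity)).mpr hs)]
  field_simp

lemma cos_arcsin_one_div_sqrt_one_add_sq_mul {q : ℝ} (hq : 0 ≤ q) :
    cos (arcsin (1 / √(1 + q ^ 2))) * √(1 + q ^ 2) = q := by
  have hpos : 0 < 1 + q ^ 2 := by positivity
  have hsub : 0 ≤ 1 - 1 / (1 + q ^ 2) := by
    rw [sub_nonneg, div_le_one hpos]; nlinarith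
  rw [cos_arcsin, div_pow, one_pow, sq_sqrt hpos.le, ← sqrt_mul hsub, sub_mul,
    one_div_mul_cancel hpos.ne', one_mul, add_sub_cancel_left, sqrt_sq hq]

/-- `a n + i b n = √(p 0 p n) e^{i θ n}` with `θ n = ∑_{k<n} φ k`: the recursion multiplies by
`q k + i = √(p k p (k+1)) e^{i φ k}` and divides by `p k`. -/
lemma cos_sin_sum_arcsin {p q a b φ : ℕ → ℝ} {N : ℕ} (hp : ∀ k, 0 < p k) (hq : ∀ k, 0 ≤ q k)
    (hpq : ∀ k, p k * p (k + 1) = 1 + q k ^ 2)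
    (hφ : ∀ k, φ k = arcsin (1 / √(p k * p (k + 1))))
    (ha1 : a 1 = q 0) (hb1 : b 1 = 1)
    (ha : ∀ k, 1 ≤ k → k < N → a k * q k - b k = p k * a (k + 1))
    (hb : ∀ k, 1 ≤ k → k < N → b k * q k + a k = p k * b (k + 1)) :
    ∀ n, 1 ≤ n → n ≤ N →
      cos (∑ k ∈ range n, φ k) * √(p 0 * p n) = a n ∧
        sin (∑ k ∈ range n, φ k) * √(p 0 * p n) = b n := by
  have hφc k : cos (φ k) * √(p k * p (k + 1)) = q k := by
    rw [hφ, hpq]; exact cos_arcsin_one_div_sqrt_one_add_sq_mul (hq k)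
  have hφs k : sin (φ k) * √(p k * p (k + 1)) = 1 := by
    rw [hφ, hpq]; exact sin_arcsin_one_div_sqrt_one_add_sq_mul (q k)
  intro n hn
  induction n, hn using Nat.le_induction with
  | base =>
    intro _
    simpa [ha1, hb1] using And.intro (hφc 0) (hφs 0)
  | succ n hn ih =>
    intro hnN
    obtain ⟨hc, hs⟩ := ih (by omega)
    obtain ⟨hc', hs'⟩ := cos_add_mul_mul_and_sin_add_mul_mul hc hs (hφc n) (hφs n)
    rw [sqrt_mul_mul_sqrt_mul _ (hp 0).le (hp n).le, ← sum_range_succ] at hc' hs'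
    constructor
    · refine mul_left_cancel₀ (hp n).ne' ?_
      linear_combination hc' + ha n hn hnN
    · refine mul_left_cancel₀ (hp n).ne' ?_
      linear_combination hs' + hb n hn hnN

section TSystem

variable {M : ℕ} {T : ℕ → ℝ → ℝ}

lemma T_mul_T_add_two (hM : 1 ≤ M)
    (hsys : ∀ j, 1 ≤ j → j ≤ 2*M-1 → ∀ x : ℝ,
      T j (x+1) * T j (x-1) = 1 + T (j+1) x * T (j-1) x)
    (hdual : ∀ j, 1 ≤ j → j ≤ M → ∀ x : ℝ, T (M-j) x = T (M+j) x) (y : ℝ) :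
    T M y * T M (y + 2) = 1 + T (M-1) (y + 1) ^ 2 := by
  have h := hsys M hM (by omega) (y + 1)
  rw [add_assoc, one_add_one_eq_two, add_sub_cancel_right, ← hdual 1 le_rfl hM] at h
  linear_combination h

/-- The instance `α = M - n`, `β = M - 1`, `p = M - n` of the generalized T-system. -/
lemma T_cos_recursion (h0 : ∀ x, T 0 x = 1)
    (hgen : ∀ α β p : ℕ, 1 ≤ p → p ≤ α → p ≤ β → ∀ x : ℝ,
      T α x * T β (x + ((α:ℝ)+(β:ℝ)-2*(p:ℝ)+2)) =
        T (α-p) (x-(p:ℝ)) * T (β-p) (x+((α:ℝ)+(β:ℝ)-(p:ℝ)+2)) +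
        T (p-1) (x+((α:ℝ)-(p:ℝ)+1)) * T (α+β-p+1) (x+((β:ℝ)-(p:ℝ)+1)))
    {n : ℕ} (hn : 1 ≤ n) (hnM : n < M) (x : ℝ) :
    T (M-n) (x + n) * T (M-1) (x + 2*n + 1) - T (n-1) (x + M + n + 1) =
      T M (x + 2*n) * T (M-(n+1)) (x + n + 1) := by
  have H := hgen (M-n) (M-1) (M-n) (by omega) le_rfl (by omega) (x + n)
  rw [Nat.sub_self, h0, show M-1-(M-n) = n-1 by omega,
    show M-n+(M-1)-(M-n)+1 = M by omega, show M-n-1 = M-(n+1) by omega] at H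
  push_cast [Nat.cast_sub hnM.le, Nat.cast_sub (hn.trans hnM.le)] at H
  ring_nf at H ⊢
  linarith

/-- The instance `α = n`, `β = M`, `p = 1` of the generalized T-system, with `T (M+n)` turned
into `T (M-n)` by duality and the shifts reduced modulo the period `2M+2`. -/
lemma T_sin_recursion (h0 : ∀ x, T 0 x = 1)
    (hdual : ∀ j, 1 ≤ j → j ≤ M → ∀ x : ℝ, T (M-j) x = T (M+j) x)
    (hper : ∀ j, ∀ x : ℝ, T j (x + (2*(M:ℝ)+2)) = T j x)
    (hgen : ∀ α β p : ℕ, 1 ≤ p → p ≤ α → p ≤ β → ∀ x : ℝ,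
      T α x * T β (x + ((α:ℝ)+(β:ℝ)-2*(p:ℝ)+2)) =
        T (α-p) (x-(p:ℝ)) * T (β-p) (x+((α:ℝ)+(β:ℝ)-(p:ℝ)+2)) +
        T (p-1) (x+((α:ℝ)-(p:ℝ)+1)) * T (α+β-p+1) (x+((β:ℝ)-(p:ℝ)+1)))
    {n : ℕ} (hn : 1 ≤ n) (hnM : n < M) (x : ℝ) :
    T (n-1) (x + M + n + 1) * T (M-1) (x + 2*n + 1) + T (M-n) (x + n) =
      T M (x + 2*n) * T n (x + M + n + 2) := by
  have H := hgen n M 1 le_rfl hn (by omega) (x + M + n + 2)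
  rw [Nat.sub_self, h0, show n+M-1+1 = M+n by omega, ← hdual n hn hnM.le] at H
  have hp1 := hper M (x + 2*n)
  have hp2 := hper (M-1) (x + 2*n + 1)
  have hp3 := hper (M-n) (x + n)
  push_cast at H
  ring_nf at H hp1 hp2 hp3 ⊢
  rw [hp1, hp2, hp3] at H
  linarith

end TSystem

theorem final_lemma_even_general (M : ℕ) (hM : 2 ≤ M) (T : ℕ → ℝ → ℝ)
    (hpos : ∀ j, j ≤ 2*M → ∀ x, 0 < T j x)
    (h0 : ∀ x, T 0 x = 1)
    (hsys : ∀ j, 1 ≤ j → j ≤ 2*M-1 → ∀ x : ℝ,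
      T j (x+1) * T j (x-1) = 1 + T (j+1) x * T (j-1) x)
    (hdual : ∀ j, 1 ≤ j → j ≤ M → ∀ x : ℝ, T (M-j) x = T (M+j) x)
    (hper : ∀ j, ∀ x : ℝ, T j (x + (2*(M:ℝ)+2)) = T j x)
    (hgen : ∀ α β p : ℕ, 1 ≤ p → p ≤ α → p ≤ β → ∀ x : ℝ,
      T α x * T β (x + ((α:ℝ)+(β:ℝ)-2*(p:ℝ)+2)) =
        T (α-p) (x-(p:ℝ)) * T (β-p) (x+((α:ℝ)+(β:ℝ)-(p:ℝ)+2)) +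
        T (p-1) (x+((α:ℝ)-(p:ℝ)+1)) * T (α+β-p+1) (x+((β:ℝ)-(p:ℝ)+1)))
    (ψ : ℝ → ℝ)
    (hψ : ∀ x, ψ x = Real.arcsin (1 / Real.sqrt (T M x * T M (x+2)))) :
    ∀ x : ℝ, Real.cos (∑ k ∈ Finset.range M, ψ (x + 2*k)) =
      1 / Real.sqrt (T M x * T M (x + 2*(M:ℝ))) := by
  intro x
  have hposM : ∀ y, 0 < T M y := hpos M (by omega)
  have hshift (k : ℕ) : x + 2 * ((k + 1 : ℕ) : ℝ) = x + 2 * k + 2 := by push_cast; ring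
  obtain ⟨hcos, -⟩ := cos_sin_sum_arcsin (p := fun k => T M (x + 2*k))
    (q := fun k => T (M-1) (x + 2*k + 1)) (a := fun n => T (M-n) (x + n))
    (b := fun n => T (n-1) (x + M + n + 1)) (φ := fun k => ψ (x + 2*k)) (N := M)
    (fun k => hposM _) (fun k => (hpos (M-1) (by omega) _).le)
    (fun k => by simp only [hshift]; exact T_mul_T_add_two (by omega) hsys hdual _)
    (fun k => by simp only [hshift]; exact hψ _)
    (by simp) (by simp [h0])
    (fun k hk hkM => by convert T_cos_recursion h0 hgen hk hkM x using 3; push_cast; ring)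
    (fun k hk hkM => by
      convert T_sin_recursion h0 hdual hper hgen hk hkM x using 3 <;> push_cast <;> ring)
    M (by omega) le_rfl
  rw [eq_div_iff (sqrt_pos.mpr (mul_pos (hposM x) (hposM _))).ne']
  simpa [h0] using hcos

theorem final_lemma_even (M : ℕ) (hM : 2 ≤ M) (hMeven : Even M) (T : ℕ → ℝ → ℝ)
    (hpos : ∀ j, j ≤ 2*M → ∀ x, 0 < T j x)
    (h0 : ∀ x, T 0 x = 1)
    (htop : ∀ x, T (2*M+1) x = 0)
    (hsys : ∀ j, 1 ≤ j → j ≤ 2*M-1 → ∀ x : ℝ,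
      T j (x+1) * T j (x-1) = 1 + T (j+1) x * T (j-1) x)
    (hdual : ∀ j, 1 ≤ j → j ≤ M → ∀ x : ℝ, T (M-j) x = T (M+j) x)
    (hper : ∀ j, ∀ x : ℝ, T j (x + (2*(M:ℝ)+2)) = T j x)
    (hgen : ∀ α β p : ℕ, 1 ≤ p → p ≤ α → p ≤ β → ∀ x : ℝ,
      T α x * T β (x + ((α:ℝ)+(β:ℝ)-2*(p:ℝ)+2)) =
        T (α-p) (x-(p:ℝ)) * T (β-p) (x+((α:ℝ)+(β:ℝ)-(p:ℝ)+2)) +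
        T (p-1) (x+((α:ℝ)-(p:ℝ)+1)) * T (α+β-p+1) (x+((β:ℝ)-(p:ℝ)+1)))
    (ψ : ℝ → ℝ)
    (hψ : ∀ x, ψ x = Real.arcsin (1 / Real.sqrt (T M x * T M (x+2)))) :
    ∀ x : ℝ, Real.cos (∑ k ∈ Finset.range M, ψ (x + 2*k)) =
      1 / Real.sqrt (T M x * T M (x + 2*(M:ℝ))) :=
  final_lemma_even_general M hM T hpos h0 hsys hdual hper hgen ψ hψ
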